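/- Every differentiable solution k of the equation B·kₓ(x,t) + kₜ(x,t)·B = 0 on the square [-b,b]×[-b,b], where B = [[0,1],[-1,0]], has the form k(x,t) = c₁((x+t)/2) + c₂((x-t)/2), where c₁ is a matrix-valued function anti-commuting with B at every point and c₂ is a matrix-valued function commuting with B at every point. -/

import Mathlib

/-!
Since `B * B = -1`, the equation says `kₜ = B kₓ B`. Hence `u = k + B k B` and `v = k - B k B`
solve the transport equations `uₜ = uₓ` and `vₜ = -vₓ`, so `u` is constant on the lines
`x + t = const` and `v` on the lines `x - t = const`; halving `u` and `v` on the two diagonals gives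
`c₁` and `c₂`, and `u` anticommutes, `v` commutes with `B`.

Constancy along such a segment is the mean value theorem: the open segment lies in the open square,
where continuous partial derivatives make the solution Fréchet differentiable, and at the endpoints
the solution is still continuous because it is Lipschitz in `x` and continuous in `t`.
-/

open Matrix Set

noncomputable section

attribute [local instance] Matrix.frobeniusNormedAddCommGroup Matrix.frobeniusNormedSpace

def Bmat : Matrix (Fin 2) (Fin 2) ℂ := !![0, 1; -1, 0]

open Filter Topology Function

section
variable {F E : Type*} [NormedAddCommGroup F] [NormedSpace ℝ F] [NormedAddCommGroup E]
  [NormedSpace ℝ E]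

theorem eq_of_hasFDerivAt_openSegment {f : F → E} {f' : F → F →L[ℝ] E} {p q : F}
    (hc : ContinuousOn f (segment ℝ p q))
    (hd : ∀ z ∈ openSegment ℝ p q, HasFDerivAt f (f' z) z)
    (h0 : ∀ z ∈ openSegment ℝ p q, f' z (q - p) = 0) : f p = f q := by
  set g : ℝ → E := fun θ => f (AffineMap.lineMap p q θ)
  have hgc : ContinuousOn g (Icc 0 1) :=
    hc.comp AffineMap.lineMap_continuous.continuousOn
      (fun θ hθ => segment_eq_image_lineMap ℝ p q ▸ mem_image_of_mem _ hθ)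
  have hgd : ∀ θ ∈ Ioo (0 : ℝ) 1, HasDerivAt g 0 θ := fun θ hθ => by
    have hz : AffineMap.lineMap p q θ ∈ openSegment ℝ p q :=
      openSegment_eq_image_lineMap ℝ p q ▸ mem_image_of_mem _ hθ
    exact h0 _ hz ▸ (hd _ hz).comp_hasDerivAt θ AffineMap.hasDerivAt_lineMap
  have hconst : EqOn g (fun _ => g 2⁻¹) (Ioo 0 1) := fun θ hθ =>
    isOpen_Ioo.is_const_of_deriv_eq_zero isPreconnected_Ioo
      (fun θ hθ => (hgd θ hθ).differentiableAt.differentiableWithinAt)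
      (fun θ hθ => (hgd θ hθ).deriv) hθ (by norm_num)
  have hclosed := hconst.of_subset_closure hgc continuousOn_const Ioo_subset_Icc_self
    (closure_Ioo zero_ne_one).ge
  simpa [g] using (hclosed (left_mem_Icc.2 zero_le_one)).trans
    (hclosed (right_mem_Icc.2 zero_le_one)).symm
end

theorem openSegment_subset_Ioo_prod_Ioo {a₁ b₁ a₂ b₂ : ℝ} {p q : ℝ × ℝ}
    (hp : p ∈ Icc a₁ b₁ ×ˢ Icc a₂ b₂) (hq : q ∈ Icc a₁ b₁ ×ˢ Icc a₂ b₂)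
    (h₁ : p.1 ≠ q.1) (h₂ : p.2 ≠ q.2) :
    openSegment ℝ p q ⊆ Ioo a₁ b₁ ×ˢ Ioo a₂ b₂ := by
  refine (Prod.openSegment_subset p q).trans (prod_mono ?_ ?_)
  · rw [openSegment_eq_Ioo' h₁]
    exact Ioo_subset_Ioo (le_min hp.1.1 hq.1.1) (max_le hp.1.2 hq.1.2)
  · rw [openSegment_eq_Ioo' h₂]
    exact Ioo_subset_Ioo (le_min hp.2.1 hq.2.1) (max_le hp.2.2 hq.2.2)

section
variable {E : Type*} [NormedAddCommGroup E] [NormedSpace ℝ E] {w wx wt : ℝ → ℝ → E}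

theorem hasFDerivAt_uncurry_of_hasDerivAt {p : ℝ × ℝ}
    (hx : ∀ᶠ q in 𝓝 p, HasDerivAt (w · q.2) (wx q.1 q.2) q.1)
    (ht : ∀ᶠ q in 𝓝 p, HasDerivAt (w q.1 ·) (wt q.1 q.2) q.2)
    (hxc : ContinuousAt (uncurry wx) p) (htc : ContinuousAt (uncurry wt) p) :
    HasFDerivAt (uncurry w)
      (((1 : ℝ →L[ℝ] ℝ).smulRight (wx p.1 p.2)).coprod ((1 : ℝ →L[ℝ] ℝ).smulRight (wt p.1 p.2)))
      p :=
  (hasStrictFDerivAt_uncurry_coprod (f₁ := fun x t => (1 : ℝ →L[ℝ] ℝ).smulRight (wx x t))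
    (f₂ := fun x t => (1 : ℝ →L[ℝ] ℝ).smulRight (wt x t)) hx ht
    ((ContinuousLinearMap.smulRightL ℝ ℝ E 1).continuous.continuousAt.comp hxc)
    ((ContinuousLinearMap.smulRightL ℝ ℝ E 1).continuous.continuousAt.comp htc)).hasFDerivAt

theorem continuousOn_uncurry_of_hasDerivAt {I J : Set ℝ} (hI : IsCompact I) (hIc : Convex ℝ I)
    (hJ : IsCompact J) (hx : ∀ x ∈ I, ∀ t ∈ J, HasDerivAt (w · t) (wx x t) x)
    (hxc : ContinuousOn (uncurry wx) (I ×ˢ J)) (ht : ∀ x ∈ I, ContinuousOn (w x) J) :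
    ContinuousOn (uncurry w) (I ×ˢ J) := by
  obtain ⟨C, hC⟩ := (hI.prod hJ).exists_bound_of_continuousOn hxc
  refine continuousOn_prod_of_continuousOn_lipschitzOnWith _ C.toNNReal ht fun t htJ => ?_
  refine hIc.lipschitzOnWith_of_nnnorm_hasDerivWithin_le
    (fun x hxI => (hx x hxI t htJ).hasDerivWithinAt) fun x hxI => ?_
  rw [← NNReal.coe_le_coe, coe_nnnorm]
  exact (hC (x, t) ⟨hxI, htJ⟩).trans (Real.le_coe_toNNReal C)

theorem eq_of_deriv_snd_eq_smul_deriv_fst {a₁ b₁ a₂ b₂ a : ℝ} (ha : a ≠ 0)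
    (hx : ∀ x ∈ Icc a₁ b₁, ∀ t ∈ Icc a₂ b₂, HasDerivAt (w · t) (wx x t) x)
    (ht : ∀ x ∈ Icc a₁ b₁, ∀ t ∈ Icc a₂ b₂, HasDerivAt (w x ·) (wt x t) t)
    (hxc : ContinuousOn (uncurry wx) (Icc a₁ b₁ ×ˢ Icc a₂ b₂))
    (htc : ContinuousOn (uncurry wt) (Icc a₁ b₁ ×ˢ Icc a₂ b₂))
    (hwt : ∀ x ∈ Icc a₁ b₁, ∀ t ∈ Icc a₂ b₂, wt x t = a • wx x t)
    {x t x' t' : ℝ} (hp : (x, t) ∈ Icc a₁ b₁ ×ˢ Icc a₂ b₂) (hq : (x', t') ∈ Icc a₁ b₁ ×ˢ Icc a₂ b₂)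
    (hline : x + a * t = x' + a * t') : w x t = w x' t' := by
  rcases eq_or_ne t t' with rfl | htt'
  · obtain rfl : x = x' := by linarith
    rfl
  have hxx' : x ≠ x' := fun h => htt' (mul_left_cancel₀ ha (by linarith))
  have hU : ∀ z ∈ openSegment ℝ (x, t) (x', t'), Ioo a₁ b₁ ×ˢ Ioo a₂ b₂ ∈ 𝓝 z := fun z hz =>
    (isOpen_Ioo.prod isOpen_Ioo).mem_nhds (openSegment_subset_Ioo_prod_Ioo hp hq hxx' htt' hz)
  have hsub : Ioo a₁ b₁ ×ˢ Ioo a₂ b₂ ⊆ Icc a₁ b₁ ×ˢ Icc a₂ b₂ :=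
    prod_mono Ioo_subset_Icc_self Ioo_subset_Icc_self
  refine eq_of_hasFDerivAt_openSegment (f := uncurry w) (p := (x, t)) (q := (x', t'))
    (f' := fun z => ((1 : ℝ →L[ℝ] ℝ).smulRight (wx z.1 z.2)).coprod
      ((1 : ℝ →L[ℝ] ℝ).smulRight (wt z.1 z.2))) ?_ (fun z hz => ?_) (fun z hz => ?_)
  · refine (continuousOn_uncurry_of_hasDerivAt isCompact_Icc (convex_Icc _ _) isCompact_Icc hx hxc
      fun x hx' t ht' => (ht x hx' t ht').continuousAt.continuousWithinAt).mono ?_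
    exact ((convex_Icc _ _).prod (convex_Icc _ _)).segment_subset hp hq
  · exact hasFDerivAt_uncurry_of_hasDerivAt
      (eventually_of_mem (hU z hz) fun q hq => hx _ (hsub hq).1 _ (hsub hq).2)
      (eventually_of_mem (hU z hz) fun q hq => ht _ (hsub hq).1 _ (hsub hq).2)
      (hxc.continuousAt (mem_of_superset (hU z hz) hsub))
      (htc.continuousAt (mem_of_superset (hU z hz) hsub))
  · have hz := hsub (openSegment_subset_Ioo_prod_Ioo hp hq hxx' htt' hz)
    simp only [ContinuousLinearMap.coprod_apply, ContinuousLinearMap.smulRight_apply,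
      one_apply_eq_self, Prod.fst_sub, Prod.snd_sub, hwt _ hz.1 _ hz.2, smul_smul,
      ← add_smul]
    rw [show x' - x + (t' - t) * a = 0 by linarith, zero_smul]
end

section
variable {R : Type*} [Ring R] {B : R}

theorem eq_mul_mul_of_mul_add_mul_eq_zero (hB : B * B = -1) {X Y : R} (h : B * X + Y * B = 0) :
    Y = B * X * B := by
  have hY : Y * B = -(B * X) := eq_neg_of_add_eq_zero_right h
  calc Y = -(Y * (B * B)) := by simp [hB]
    _ = B * X * B := by rw [← mul_assoc, hY]; noncomm_ring

theorem mul_mul_mul_mul_eq_self (hB : B * B = -1) (A : R) : B * (B * A * B) * B = A := by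
  calc B * (B * A * B) * B = (B * B) * A * (B * B) := by noncomm_ring
    _ = A := by simp [hB]

theorem add_mul_mul_mul_eq_neg (hB : B * B = -1) (A : R) :
    (A + B * A * B) * B = -(B * (A + B * A * B)) := by
  calc (A + B * A * B) * B = A * B + B * A * (B * B) := by noncomm_ring
    _ = -(B * A + (B * B) * (A * B)) := by rw [hB]; noncomm_ring
    _ = -(B * (A + B * A * B)) := by noncomm_ring

theorem sub_mul_mul_commute (hB : B * B = -1) (A : R) :
    (A - B * A * B) * B = B * (A - B * A * B) := by
  calc (A - B * A * B) * B = A * B - B * A * (B * B) := by noncomm_ring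
    _ = B * A - (B * B) * (A * B) := by rw [hB]; noncomm_ring
    _ = B * (A - B * A * B) := by noncomm_ring
end

theorem Bmat_mul_self : Bmat * Bmat = -1 := by
  ext i j; fin_cases i <;> fin_cases j <;> simp [Bmat]

theorem add_smul_conj_eq_of_solution {𝔸 : Type*} [NormedRing 𝔸] [NormedAlgebra ℝ 𝔸] {B : 𝔸}
    (hB : B * B = -1) {a₁ b₁ a₂ b₂ : ℝ} {k kx kt : ℝ → ℝ → 𝔸}
    (hkx : ∀ x ∈ Icc a₁ b₁, ∀ t ∈ Icc a₂ b₂, HasDerivAt (k · t) (kx x t) x)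
    (hkt : ∀ x ∈ Icc a₁ b₁, ∀ t ∈ Icc a₂ b₂, HasDerivAt (k x ·) (kt x t) t)
    (hkxc : ContinuousOn (uncurry kx) (Icc a₁ b₁ ×ˢ Icc a₂ b₂))
    (hktc : ContinuousOn (uncurry kt) (Icc a₁ b₁ ×ˢ Icc a₂ b₂))
    (hpde : ∀ x ∈ Icc a₁ b₁, ∀ t ∈ Icc a₂ b₂, B * kx x t + kt x t * B = 0)
    {ε : ℝ} (hε : ε * ε = 1) {x t x' t' : ℝ} (hp : (x, t) ∈ Icc a₁ b₁ ×ˢ Icc a₂ b₂)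
    (hq : (x', t') ∈ Icc a₁ b₁ ×ˢ Icc a₂ b₂) (hline : x + ε * t = x' + ε * t') :
    k x t + ε • (B * k x t * B) = k x' t' + ε • (B * k x' t' * B) := by
  refine eq_of_deriv_snd_eq_smul_deriv_fst (w := fun x t => k x t + ε • (B * k x t * B))
    (wx := fun x t => kx x t + ε • (B * kx x t * B))
    (wt := fun x t => kt x t + ε • (B * kt x t * B)) (left_ne_zero_of_mul_eq_one hε)
    (fun x hx t ht => ?_) (fun x hx t ht => ?_) ?_ ?_ (fun x hx t ht => ?_) hp hq hline
  · exact (hkx x hx t ht).add ((((hkx x hx t ht).const_mul B).mul_const B).const_smul ε)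
  · exact (hkt x hx t ht).add ((((hkt x hx t ht).const_mul B).mul_const B).const_smul ε)
  · exact hkxc.add (((continuousOn_const.mul hkxc).mul continuousOn_const).const_smul ε)
  · exact hktc.add (((continuousOn_const.mul hktc).mul continuousOn_const).const_smul ε)
  · rw [eq_mul_mul_of_mul_add_mul_eq_zero hB (hpde x hx t ht), mul_mul_mul_mul_eq_self hB, smul_add,
      smul_smul, hε, one_smul, add_comm]

attribute [local instance] Matrix.frobeniusNormedRing Matrix.frobeniusNormedAlgebra

theorem stmt_4_general (b : ℝ)
    (k kx kt : ℝ → ℝ → Matrix (Fin 2) (Fin 2) ℂ)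
    (hkx : ∀ x ∈ Icc (-b) b, ∀ t ∈ Icc (-b) b, HasDerivAt (fun s => k s t) (kx x t) x)
    (hkt : ∀ x ∈ Icc (-b) b, ∀ t ∈ Icc (-b) b, HasDerivAt (fun s => k x s) (kt x t) t)
    (hkxc : ContinuousOn (fun p : ℝ × ℝ => kx p.1 p.2) (Icc (-b) b ×ˢ Icc (-b) b))
    (hktc : ContinuousOn (fun p : ℝ × ℝ => kt p.1 p.2) (Icc (-b) b ×ˢ Icc (-b) b))
    (hpde : ∀ x ∈ Icc (-b) b, ∀ t ∈ Icc (-b) b,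
      Bmat * kx x t + kt x t * Bmat = 0) :
    ∃ c₁ c₂ : ℝ → Matrix (Fin 2) (Fin 2) ℂ,
      (∀ s, c₁ s * Bmat = -(Bmat * c₁ s)) ∧
      (∀ s, c₂ s * Bmat = Bmat * c₂ s) ∧
      (∀ x ∈ Icc (-b) b, ∀ t ∈ Icc (-b) b,
        k x t = c₁ ((x + t) / 2) + c₂ ((x - t) / 2)) := by
  refine ⟨fun s => (2 : ℂ)⁻¹ • (k s s + Bmat * k s s * Bmat),
    fun s => (2 : ℂ)⁻¹ • (k s (-s) - Bmat * k s (-s) * Bmat), fun s => ?_, fun s => ?_,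
    fun x hx t ht => ?_⟩
  · rw [smul_mul_assoc, mul_smul_comm, add_mul_mul_mul_eq_neg Bmat_mul_self, smul_neg]
  · rw [smul_mul_assoc, mul_smul_comm, sub_mul_mul_commute Bmat_mul_self]
  · have hu : (x + t) / 2 ∈ Icc (-b) b := ⟨by linarith [hx.1, ht.1], by linarith [hx.2, ht.2]⟩
    have hv : (x - t) / 2 ∈ Icc (-b) b := ⟨by linarith [hx.1, ht.2], by linarith [hx.2, ht.1]⟩
    have hv' : -((x - t) / 2) ∈ Icc (-b) b := ⟨by linarith [hv.2], by linarith [hv.1]⟩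
    have hk₁ := add_smul_conj_eq_of_solution Bmat_mul_self hkx hkt hkxc hktc hpde
      (one_mul (1 : ℝ)) ⟨hx, ht⟩ ⟨hu, hu⟩ (by ring)
    have hk₂ := add_smul_conj_eq_of_solution Bmat_mul_self hkx hkt hkxc hktc hpde
      (by norm_num : (-1 : ℝ) * -1 = 1) ⟨hx, ht⟩ ⟨hv, hv'⟩ (by ring)
    simp only [one_smul, neg_one_smul, ← sub_eq_add_neg] at hk₁ hk₂
    simp only [← hk₁, ← hk₂]
    module

/-- Every continuously differentiable solution of B kₓ + kₜ B = 0 on the square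
`[-b,b] × [-b,b]` is of the form `c₁((x+t)/2) + c₂((x-t)/2)` where `c₁` anti-commutes
with `B` pointwise and `c₂` commutes with `B` pointwise. -/
theorem stmt_4 (b : ℝ) (hb : 0 < b)
    (k kx kt : ℝ → ℝ → Matrix (Fin 2) (Fin 2) ℂ)
    (hkx : ∀ x ∈ Icc (-b) b, ∀ t ∈ Icc (-b) b, HasDerivAt (fun s => k s t) (kx x t) x)
    (hkt : ∀ x ∈ Icc (-b) b, ∀ t ∈ Icc (-b) b, HasDerivAt (fun s => k x s) (kt x t) t)
    (hkxc : ContinuousOn (fun p : ℝ × ℝ => kx p.1 p.2) (Icc (-b) b ×ˢ Icc (-b) b))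
    (hktc : ContinuousOn (fun p : ℝ × ℝ => kt p.1 p.2) (Icc (-b) b ×ˢ Icc (-b) b))
    (hpde : ∀ x ∈ Icc (-b) b, ∀ t ∈ Icc (-b) b,
      Bmat * kx x t + kt x t * Bmat = 0) :
    ∃ c₁ c₂ : ℝ → Matrix (Fin 2) (Fin 2) ℂ,
      (∀ s, c₁ s * Bmat = -(Bmat * c₁ s)) ∧
      (∀ s, c₂ s * Bmat = Bmat * c₂ s) ∧
      (∀ x ∈ Icc (-b) b, ∀ t ∈ Icc (-b) b,
        k x t = c₁ ((x + t) / 2) + c₂ ((x - t) / 2)) :=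
  stmt_4_general b k kx kt hkx hkt hkxc hktc hpde
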